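/- arXiv:0902.1923 — 3 statements merged into one kernel-verified Lean document; each statement's English description precedes it below -/
import Mathlib

section
/- Let 𝓗 be an infinite-dimensional separable real Hilbert space, let H and G be bounded self-adjoint operators on 𝓗, and let (u_i)_{i≥1} be a Hilbert (complete orthonormal) basis of 𝓗 consisting of eigenvectors of H, H u_i = λ_i u_i, where the sequence of eigenvalues (λ_i)_{i≥1} is nondecreasing. Then for every integer k ≥ 1, ∑_{i=1}^k (λ_{k+1} − λ_i)² ⟨[H,G]u_i, G u_i⟩ ≤ ∑_{i=1}^k (λ_{k+1} − λ_i) ‖[H,G]u_i‖², where [H,G] := HG − GH denotes the commutator, ⟨·,·⟩ the inner product of 𝓗 and ‖·‖ its norm. -/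
/-!
Write `C = A * G - G * A` and, for `i ≤ k`, let `φᵢ` and `ψᵢ` be the components of `G uᵢ` and
`C uᵢ` orthogonal to `u₁, …, u_k`. Since `(A - λᵢ) G uᵢ = C uᵢ` and `A` preserves the span of
`u₁, …, u_k`, we get `ψᵢ = (A - λᵢ) φᵢ`; the Rayleigh bound `λ_{k+1} ‖φ‖² ≤ ⟪A φ, φ⟫` on the
complement then gives `(λ_{k+1} - λᵢ) ‖φᵢ‖² ≤ ⟪ψᵢ, φᵢ⟫`, which Cauchy–Schwarz turns into
`(λ_{k+1} - λᵢ)² ⟪ψᵢ, φᵢ⟫ ≤ (λ_{k+1} - λᵢ) ‖ψᵢ‖²`.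
The components along `uⱼ`, `j ≤ k`, contribute `(λⱼ - λᵢ) gᵢⱼ²` and `(λⱼ - λᵢ)² gᵢⱼ²` to
`⟪C uᵢ, G uᵢ⟫` and `‖C uᵢ‖²`, where `gᵢⱼ = ⟪uⱼ, G uᵢ⟫` is symmetric; after weighting and summing
over `i`, the difference of these contributions is antisymmetric in `(i, j)`, hence zero.
-/

open scoped RealInnerProductSpace

open Finset

theorem Finset.sum_Icc_one_eq_sum_range {M : Type*} [AddCommMonoid M] (f : ℕ → M) (k : ℕ) :
    ∑ i ∈ Icc 1 k, f i = ∑ n ∈ range k, f (n + 1) := by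
  rw [← Ico_add_one_right_eq_Icc, sum_Ico_eq_sum_range]
  simp only [add_comm, add_tsub_cancel_right]

section

variable {E : Type*} [NormedAddCommGroup E] [InnerProductSpace ℝ E] {ι : Type*}

theorem sq_mul_inner_le_mul_norm_sq_of_mul_norm_sq_le_inner {x y : E} {d : ℝ} (hd : 0 ≤ d)
    (h : d * ‖y‖ ^ 2 ≤ ⟪x, y⟫) : d ^ 2 * ⟪x, y⟫ ≤ d * ‖x‖ ^ 2 := by
  have hxy : 0 ≤ ⟪x, y⟫ := (mul_nonneg hd (sq_nonneg _)).trans h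
  rcases hxy.eq_or_lt with hzero | hpos
  · rw [← hzero, mul_zero]
    positivity
  have hcs : ⟪x, y⟫ * ⟪x, y⟫ ≤ ‖x‖ ^ 2 * ‖y‖ ^ 2 := by
    simpa only [real_inner_self_eq_norm_sq] using real_inner_mul_inner_self_le x y
  refine le_of_mul_le_mul_right ?_ hpos
  calc d ^ 2 * ⟪x, y⟫ * ⟪x, y⟫ ≤ d ^ 2 * (‖x‖ ^ 2 * ‖y‖ ^ 2) := by
        rw [mul_assoc]; gcongr
    _ = d * ‖x‖ ^ 2 * (d * ‖y‖ ^ 2) := by ring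
    _ ≤ d * ‖x‖ ^ 2 * ⟪x, y⟫ := by gcongr

theorem sum_sq_sub_mul_sum_eq_sum_sub_mul_sum_sq (s : Finset ι) (μ : ι → ℝ) (c : ℝ)
    {w : ι → ι → ℝ} (hw : ∀ i j, w i j = w j i) :
    ∑ i ∈ s, (c - μ i) ^ 2 * ∑ j ∈ s, (μ j - μ i) * w i j
      = ∑ i ∈ s, (c - μ i) * ∑ j ∈ s, (μ j - μ i) ^ 2 * w i j := by
  set F : ι → ι → ℝ := fun i j => (c - μ i) * (c - μ j) * (μ j - μ i) * w i j
  have hF : ∑ i ∈ s, ∑ j ∈ s, F i j = -∑ i ∈ s, ∑ j ∈ s, F i j := by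
    conv_lhs => rw [Finset.sum_comm]
    simp only [F, hw, ← sum_neg_distrib]
    refine sum_congr rfl fun i _ => sum_congr rfl fun j _ => by ring
  have hdiff : ∑ i ∈ s, (c - μ i) ^ 2 * ∑ j ∈ s, (μ j - μ i) * w i j
      - ∑ i ∈ s, (c - μ i) * ∑ j ∈ s, (μ j - μ i) ^ 2 * w i j = ∑ i ∈ s, ∑ j ∈ s, F i j := by
    simp only [F, ← sum_sub_distrib, mul_sum]
    refine sum_congr rfl fun i _ => sum_congr rfl fun j _ => by ring
  linarith

namespace Orthonormal

variable {v : ι → E} (hv : Orthonormal ℝ v) (s : Finset ι)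
include hv

theorem inner_sub_sum_inner_smul {j : ι} (hj : j ∈ s) (x : E) :
    ⟪v j, x - ∑ i ∈ s, ⟪v i, x⟫ • v i⟫ = 0 := by
  rw [inner_sub_right, hv.inner_right_sum _ hj, sub_self]

theorem inner_eq_sum_add_inner_sub_sum (x y : E) :
    ⟪x, y⟫ = ∑ j ∈ s, ⟪v j, x⟫ * ⟪v j, y⟫
      + ⟪x - ∑ j ∈ s, ⟪v j, x⟫ • v j, y - ∑ j ∈ s, ⟪v j, y⟫ • v j⟫ := by
  have hperp (l : ι → ℝ) (z : E) : ⟪∑ j ∈ s, l j • v j, z - ∑ j ∈ s, ⟪v j, z⟫ • v j⟫ = 0 := by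
    rw [sum_inner]
    exact sum_eq_zero fun j hj => by
      rw [real_inner_smul_left, hv.inner_sub_sum_inner_smul s hj, mul_zero]
  conv_lhs => rw [← sub_add_cancel x (∑ j ∈ s, ⟪v j, x⟫ • v j),
    ← sub_add_cancel y (∑ j ∈ s, ⟪v j, y⟫ • v j)]
  rw [inner_add_left, inner_add_right, inner_add_right, hv.inner_sum, hperp,
    real_inner_comm (∑ j ∈ s, _ • v j) (x - _), hperp]
  simp only [conj_trivial]
  ring

end Orthonormal

namespace IsSelfAdjoint

variable [CompleteSpace E] {A : E →L[ℝ] E} (hA : IsSelfAdjoint A) (G : E →L[ℝ] E)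
include hA

theorem inner_commutator_apply_of_apply_eq_smul {x y : E} {a b : ℝ} (hx : A x = a • x)
    (hy : A y = b • y) : ⟪y, (A * G - G * A) x⟫ = (b - a) * ⟪y, G x⟫ := by
  have hsym : ⟪A y, G x⟫ = ⟪y, A (G x)⟫ := hA.isSymmetric y (G x)
  change ⟪y, A (G x) - G (A x)⟫ = _
  rw [hx, map_smul, inner_sub_right, ← hsym, hy, real_inner_smul_left, real_inner_smul_right]
  ring

theorem commutator_apply_sub_sum_inner_smul {v : ι → E} {μ : ι → ℝ} {s : Finset ι}
    (hμ : ∀ j ∈ s, A (v j) = μ j • v j) {x : E} {a : ℝ} (hx : A x = a • x) :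
    (A * G - G * A) x - ∑ j ∈ s, ⟪v j, (A * G - G * A) x⟫ • v j
      = A (G x - ∑ j ∈ s, ⟪v j, G x⟫ • v j) - a • (G x - ∑ j ∈ s, ⟪v j, G x⟫ • v j) := by
  have hsum : ∑ j ∈ s, ⟪v j, (A * G - G * A) x⟫ • v j
      = A (∑ j ∈ s, ⟪v j, G x⟫ • v j) - a • ∑ j ∈ s, ⟪v j, G x⟫ • v j := by
    simp only [map_sum, map_smul, smul_sum, ← sum_sub_distrib]
    refine sum_congr rfl fun j hj => ?_
    rw [hA.inner_commutator_apply_of_apply_eq_smul G hx (hμ j hj), hμ j hj, smul_smul, smul_smul,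
      ← sub_smul]
    ring_nf
  change A (G x) - G (A x) - _ = _
  rw [hsum, map_sub, smul_sub, hx, map_smul]
  abel

end IsSelfAdjoint

theorem HilbertBasis.mul_norm_sq_le_inner_of_apply_eq_smul [CompleteSpace E]
    (b : HilbertBasis ι ℝ E) {A : E →L[ℝ] E} (hA : IsSelfAdjoint A) {μ : ι → ℝ}
    (hμ : ∀ i, A (b i) = μ i • b i) {c : ℝ} {x : E} (hx : ∀ i, μ i < c → ⟪b i, x⟫ = 0) :
    c * ‖x‖ ^ 2 ≤ ⟪A x, x⟫ := by
  have hnorm : HasSum (fun i => c * (⟪x, b i⟫ * ⟪b i, x⟫)) (c * ‖x‖ ^ 2) := by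
    rw [← real_inner_self_eq_norm_sq]
    exact (b.hasSum_inner_mul_inner x x).mul_left c
  have hquad : HasSum (fun i => μ i * (⟪x, b i⟫ * ⟪b i, x⟫)) ⟪A x, x⟫ := by
    rw [real_inner_comm]
    refine (b.hasSum_inner_mul_inner x (A x)).congr_fun fun i => ?_
    have hsym : ⟪A (b i), x⟫ = ⟪b i, A x⟫ := hA.isSymmetric (b i) x
    rw [← hsym, hμ, real_inner_smul_left]
    ring
  refine hasSum_le (fun i => ?_) hnorm hquad
  rw [real_inner_comm (b i) x]
  rcases lt_or_ge (μ i) c with hi | hi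
  · rw [hx i hi, mul_zero, mul_zero, mul_zero]
  · gcongr
    exact mul_self_nonneg _

namespace Orthonormal

variable [CompleteSpace E] {v : ι → E} (hv : Orthonormal ℝ v) (s : Finset ι) {A : E →L[ℝ] E}
  (hA : IsSelfAdjoint A) {μ : ι → ℝ} (hμ : ∀ j ∈ s, A (v j) = μ j • v j) {c : ℝ}
  (hgap : ∀ z, (∀ j ∈ s, ⟪v j, z⟫ = 0) → c * ‖z‖ ^ 2 ≤ ⟪A z, z⟫)
include hv hA hμ hgap

theorem sq_gap_mul_inner_commutator_le (G : E →L[ℝ] E) {x : E} {a : ℝ} (hx : A x = a • x)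
    (ha : a ≤ c) :
    (c - a) ^ 2 * (⟪(A * G - G * A) x, G x⟫ - ∑ j ∈ s, (μ j - a) * ⟪v j, G x⟫ ^ 2)
      ≤ (c - a) * (‖(A * G - G * A) x‖ ^ 2 - ∑ j ∈ s, (μ j - a) ^ 2 * ⟪v j, G x⟫ ^ 2) := by
  set φ := G x - ∑ j ∈ s, ⟪v j, G x⟫ • v j
  set ψ := (A * G - G * A) x - ∑ j ∈ s, ⟪v j, (A * G - G * A) x⟫ • v j
  have hψ : ψ = A φ - a • φ := hA.commutator_apply_sub_sum_inner_smul G hμ hx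
  have hcoef : ∀ j ∈ s, ⟪v j, (A * G - G * A) x⟫ = (μ j - a) * ⟪v j, G x⟫ :=
    fun j hj => hA.inner_commutator_apply_of_apply_eq_smul G hx (hμ j hj)
  have hinner : ⟪(A * G - G * A) x, G x⟫ - ∑ j ∈ s, (μ j - a) * ⟪v j, G x⟫ ^ 2 = ⟪ψ, φ⟫ := by
    rw [hv.inner_eq_sum_add_inner_sub_sum s, sub_eq_iff_eq_add', add_left_inj]
    exact sum_congr rfl fun j hj => by rw [hcoef j hj]; ring
  have hnorm : ‖(A * G - G * A) x‖ ^ 2 - ∑ j ∈ s, (μ j - a) ^ 2 * ⟪v j, G x⟫ ^ 2 = ‖ψ‖ ^ 2 := by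
    rw [← real_inner_self_eq_norm_sq, ← real_inner_self_eq_norm_sq,
      hv.inner_eq_sum_add_inner_sub_sum s, sub_eq_iff_eq_add', add_left_inj]
    exact sum_congr rfl fun j hj => by rw [hcoef j hj]; ring
  have hφ : (c - a) * ‖φ‖ ^ 2 ≤ ⟪ψ, φ⟫ := by
    have := hgap φ fun j hj => hv.inner_sub_sum_inner_smul s hj (G x)
    rw [hψ, inner_sub_left, real_inner_smul_left, real_inner_self_eq_norm_sq]
    linarith
  rw [hinner, hnorm]
  exact sq_mul_inner_le_mul_norm_sq_of_mul_norm_sq_le_inner (sub_nonneg.2 ha) hφ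

theorem sum_sq_gap_mul_inner_commutator_le {G : E →L[ℝ] E} (hG : IsSelfAdjoint G)
    (hc : ∀ i ∈ s, μ i ≤ c) :
    ∑ i ∈ s, (c - μ i) ^ 2 * ⟪(A * G - G * A) (v i), G (v i)⟫
      ≤ ∑ i ∈ s, (c - μ i) * ‖(A * G - G * A) (v i)‖ ^ 2 := by
  have hsymm : ∀ i j, ⟪v j, G (v i)⟫ ^ 2 = ⟪v i, G (v j)⟫ ^ 2 := fun i j => by
    have h : ⟪G (v j), v i⟫ = ⟪v j, G (v i)⟫ := hG.isSymmetric (v j) (v i)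
    rw [← h, real_inner_comm]
  have hterm := sum_le_sum fun i hi =>
    hv.sq_gap_mul_inner_commutator_le s hA hμ hgap G (hμ i hi) (hc i hi)
  simp only [mul_sub, sum_sub_distrib] at hterm
  linarith [sum_sq_sub_mul_sum_eq_sum_sub_mul_sum_sq s μ c hsymm]

end Orthonormal

end

theorem commutator_gap_lemma_general
    {𝓗 : Type*} [NormedAddCommGroup 𝓗] [InnerProductSpace ℝ 𝓗] [CompleteSpace 𝓗]
    (A G : 𝓗 →L[ℝ] 𝓗) (hA : IsSelfAdjoint A) (hG : IsSelfAdjoint G)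
    (u : ℕ → 𝓗) (lam : ℕ → ℝ)
    (h_orth : Orthonormal ℝ (fun i : {i : ℕ // 1 ≤ i} => u i))
    (h_complete : (Submodule.span ℝ (u '' {i : ℕ | 1 ≤ i})).topologicalClosure = ⊤)
    (h_eig : ∀ i : ℕ, 1 ≤ i → A (u i) = lam i • u i)
    (h_mono : ∀ i j : ℕ, 1 ≤ i → i ≤ j → lam i ≤ lam j)
    (k : ℕ) :
    ∑ i ∈ Finset.Icc 1 k,
        (lam (k+1) - lam i)^2 * ⟪(A * G - G * A) (u i), G (u i)⟫
      ≤ ∑ i ∈ Finset.Icc 1 k,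
        (lam (k+1) - lam i) * ‖(A * G - G * A) (u i)‖^2 := by
  set v : ℕ → 𝓗 := fun n => u (n + 1)
  have hv : Orthonormal ℝ v :=
    h_orth.comp (fun n => ⟨n + 1, n.succ_pos⟩) fun m n h => by simpa using h
  have hrange : Set.range v = u '' {i | 1 ≤ i} := by
    ext x
    simp only [Set.mem_range, Set.mem_image, Set.mem_ofPred_eq, v]
    exact ⟨fun ⟨n, hn⟩ => ⟨n + 1, n.succ_pos, hn⟩,
      fun ⟨i, hi, hx⟩ => ⟨i - 1, by rwa [Nat.sub_add_cancel hi]⟩⟩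
  set b := HilbertBasis.mk hv (by rw [hrange, h_complete])
  have hb : ⇑b = v := HilbertBasis.coe_mk hv _
  have hμ (n : ℕ) : A (v n) = lam (n + 1) • v n := h_eig (n + 1) n.succ_pos
  rw [sum_Icc_one_eq_sum_range, sum_Icc_one_eq_sum_range]
  refine hv.sum_sq_gap_mul_inner_commutator_le (range k) hA (fun j _ => hμ j) (fun z hz => ?_) hG
    fun i hi => h_mono _ _ (by omega) (Nat.le_succ_of_le (mem_range.1 hi))
  refine b.mul_norm_sq_le_inner_of_apply_eq_smul hA (fun i => by rw [hb]; exact hμ i)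
    fun i hi => ?_
  rw [hb]
  refine hz i (mem_range.2 (lt_of_not_ge fun hki => hi.not_ge ?_))
  exact h_mono _ _ (by omega) (by omega)

/-- Abstract commutator–gap lemma (Lemma 2.1): for bounded self-adjoint operators `A` and `G`
on an infinite-dimensional separable real Hilbert space `𝓗`, and a complete orthonormal
family `(u i)_{i ≥ 1}` of eigenvectors of `A` with nondecreasing eigenvalues `lam i`,
one has the Harrell–Stubbe/Ashbaugh–Hermi inequality. -/
theorem commutator_gap_lemma
    {𝓗 : Type*} [NormedAddCommGroup 𝓗] [InnerProductSpace ℝ 𝓗] [CompleteSpace 𝓗]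
    [TopologicalSpace.SeparableSpace 𝓗]
    (hinf : ¬ FiniteDimensional ℝ 𝓗)
    (A G : 𝓗 →L[ℝ] 𝓗) (hA : IsSelfAdjoint A) (hG : IsSelfAdjoint G)
    (u : ℕ → 𝓗) (lam : ℕ → ℝ)
    (h_orth : Orthonormal ℝ (fun i : {i : ℕ // 1 ≤ i} => u i))
    (h_complete : (Submodule.span ℝ (u '' {i : ℕ | 1 ≤ i})).topologicalClosure = ⊤)
    (h_eig : ∀ i : ℕ, 1 ≤ i → A (u i) = lam i • u i)
    (h_mono : ∀ i j : ℕ, 1 ≤ i → i ≤ j → lam i ≤ lam j)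
    (k : ℕ) (hk : 1 ≤ k) :
    ∑ i ∈ Finset.Icc 1 k,
        (lam (k+1) - lam i)^2 * ⟪(A * G - G * A) (u i), G (u i)⟫
      ≤ ∑ i ∈ Finset.Icc 1 k,
        (lam (k+1) - lam i) * ‖(A * G - G * A) (u i)‖^2 :=
  commutator_gap_lemma_general A G hA hG u lam h_orth h_complete h_eig h_mono k
end

section
/- Let n > 0 be a real number, k ≥ 1 an integer, λ_1, …, λ_{k+1} real numbers and δ_1, …, δ_k real numbers, and suppose that n ∑_{i=1}^k (λ_{k+1} − λ_i)² ≤ 4 ∑_{i=1}^k (λ_{k+1} − λ_i)(λ_i + δ_i). Define D_{nk} := ((1 + 2/n)(1/k)∑_{i=1}^k λ_i + (2/n)(1/k)∑_{i=1}^k δ_i)² − (1 + 4/n)(1/k)∑_{i=1}^k λ_i² − (4/n)(1/k)∑_{i=1}^k λ_i δ_i. Then D_{nk} ≥ 0 and (1 + 2/n)(1/k)∑_{i=1}^k λ_i + (2/n)(1/k)∑_{i=1}^k δ_i − √D_{nk} ≤ λ_{k+1} ≤ (1 + 2/n)(1/k)∑_{i=1}^k λ_i + (2/n)(1/k)∑_{i=1}^k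 δ_i + √D_{nk}. -/
/-!
Expanding the squares turns inequality (I) into `n k (x² - 2 b x + c) ≤ 0` for `x = λ_{k+1}`,
where `b` is the claimed centre and `b² - c = D_{nk}`. A monic quadratic that is nonpositive at
some point has nonnegative discriminant `b² - c`, and the point lies within `√(b² - c)` of `b`.
-/

open Finset

theorem nonneg_and_mem_Icc_of_sq_sub_two_mul_add_nonpos {x b c : ℝ}
    (h : x ^ 2 - 2 * b * x + c ≤ 0) :
    0 ≤ b ^ 2 - c ∧ b - √(b ^ 2 - c) ≤ x ∧ x ≤ b + √(b ^ 2 - c) := by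
  have hsq : (x - b) ^ 2 ≤ b ^ 2 - c := by linarith
  have habs := abs_le.mp (Real.abs_le_sqrt hsq)
  exact ⟨(sq_nonneg _).trans hsq, by linarith [habs.1], by linarith [habs.2]⟩

section Sums

variable {ι : Type*} (s : Finset ι) (x : ℝ) (f g : ι → ℝ)

theorem sum_sub_sq_eq :
    ∑ i ∈ s, (x - f i) ^ 2 = #s * x ^ 2 - 2 * x * ∑ i ∈ s, f i + ∑ i ∈ s, f i ^ 2 := by
  simp only [sub_sq, sum_add_distrib, sum_sub_distrib, sum_const, nsmul_eq_mul, mul_sum]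

theorem sum_sub_mul_add_eq :
    ∑ i ∈ s, (x - f i) * (f i + g i)
      = x * ∑ i ∈ s, f i + x * ∑ i ∈ s, g i - ∑ i ∈ s, f i ^ 2 - ∑ i ∈ s, f i * g i := by
  simp only [mul_sum, ← sum_add_distrib, ← sum_sub_distrib]
  exact sum_congr rfl fun i _ => by ring

end Sums

theorem sq_sub_two_mul_add_nonpos_of_yang {ι : Type*} {s : Finset ι} (hs : s.Nonempty)
    {n : ℝ} (hn : 0 < n) (x : ℝ) (lam δ : ι → ℝ)
    (h : n * ∑ i ∈ s, (x - lam i) ^ 2 ≤ 4 * ∑ i ∈ s, (x - lam i) * (lam i + δ i)) :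
    x ^ 2 - 2 * ((1 + 2 / n) * (1 / #s) * ∑ i ∈ s, lam i + (2 / n) * (1 / #s) * ∑ i ∈ s, δ i) * x
      + ((1 + 4 / n) * (1 / #s) * ∑ i ∈ s, lam i ^ 2
        + (4 / n) * (1 / #s) * ∑ i ∈ s, lam i * δ i) ≤ 0 := by
  rw [sum_sub_sq_eq, sum_sub_mul_add_eq] at h
  have hcard : (0 : ℝ) < #s := by exact_mod_cast hs.card_pos
  have hscale : 0 < n * #s := mul_pos hn hcard
  refine nonpos_of_mul_nonpos_right ?_ hscale
  field_simp
  linarith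

/-- Parts (II) and (III) of Theorem 2.1: if the Yang-type inequality (I) holds, then the
discriminant-type quantity `D_{nk}` is nonnegative and `lam (k+1)` lies between the two
roots of the associated quadratic polynomial. -/
theorem two_sided_bound_from_yang (n : ℝ) (hn : 0 < n) (k : ℕ) (hk : 1 ≤ k)
    (lam : ℕ → ℝ) (δ : ℕ → ℝ)
    (h : n * ∑ i ∈ Finset.Icc 1 k, (lam (k+1) - lam i)^2
        ≤ 4 * ∑ i ∈ Finset.Icc 1 k, (lam (k+1) - lam i) * (lam i + δ i)) :
    0 ≤ ((1 + 2/n) * ((1:ℝ)/k) * ∑ i ∈ Finset.Icc 1 k, lam i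
          + (2/n) * ((1:ℝ)/k) * ∑ i ∈ Finset.Icc 1 k, δ i)^2
        - (1 + 4/n) * ((1:ℝ)/k) * ∑ i ∈ Finset.Icc 1 k, (lam i)^2
        - (4/n) * ((1:ℝ)/k) * ∑ i ∈ Finset.Icc 1 k, lam i * δ i
    ∧ (1 + 2/n) * ((1:ℝ)/k) * ∑ i ∈ Finset.Icc 1 k, lam i
        + (2/n) * ((1:ℝ)/k) * ∑ i ∈ Finset.Icc 1 k, δ i
        - Real.sqrt (((1 + 2/n) * ((1:ℝ)/k) * ∑ i ∈ Finset.Icc 1 k, lam i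
            + (2/n) * ((1:ℝ)/k) * ∑ i ∈ Finset.Icc 1 k, δ i)^2
          - (1 + 4/n) * ((1:ℝ)/k) * ∑ i ∈ Finset.Icc 1 k, (lam i)^2
          - (4/n) * ((1:ℝ)/k) * ∑ i ∈ Finset.Icc 1 k, lam i * δ i)
      ≤ lam (k+1)
    ∧ lam (k+1)
      ≤ (1 + 2/n) * ((1:ℝ)/k) * ∑ i ∈ Finset.Icc 1 k, lam i
        + (2/n) * ((1:ℝ)/k) * ∑ i ∈ Finset.Icc 1 k, δ i
        + Real.sqrt (((1 + 2/n) * ((1:ℝ)/k) * ∑ i ∈ Finset.Icc 1 k, lam i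
            + (2/n) * ((1:ℝ)/k) * ∑ i ∈ Finset.Icc 1 k, δ i)^2
          - (1 + 4/n) * ((1:ℝ)/k) * ∑ i ∈ Finset.Icc 1 k, (lam i)^2
          - (4/n) * ((1:ℝ)/k) * ∑ i ∈ Finset.Icc 1 k, lam i * δ i) := by
  have hs : (Finset.Icc 1 k).Nonempty := Finset.nonempty_Icc.mpr hk
  have hquad := sq_sub_two_mul_add_nonpos_of_yang hs hn (lam (k + 1)) lam δ h
  rw [Nat.card_Icc, Nat.add_sub_cancel] at hquad
  simpa only [sub_sub] using nonneg_and_mem_Icc_of_sq_sub_two_mul_add_nonpos hquad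
end

section
/- Let n ≥ 1 and m ≥ 0 be integers. For ℓ ≥ 0 define the multiplicity μ_{n,ℓ} of the ℓ-th eigenvalue of the Laplacian on the standard sphere 𝕊^n by μ_{n,0} = 1 and μ_{n,ℓ} = C(n+ℓ, n) − C(n+ℓ−2, n) for ℓ ≥ 1 (binomial coefficients, with C(a,b) = 0 when a < b), and set e_ℓ = ℓ(ℓ + n − 1) and Λ = (m+1)(m+n). Then n ∑_{ℓ=0}^m μ_{n,ℓ} (Λ − e_ℓ)² = ∑_{ℓ=0}^m μ_{n,ℓ} (Λ − e_ℓ)(4 e_ℓ + n²). -/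
/-- Multiplicity of the `ℓ`-th eigenvalue of the Laplacian on the standard sphere `𝕊ⁿ`:
`μ_{n,0} = 1` and `μ_{n,ℓ} = C(n+ℓ, n) − C(n+ℓ−2, n)` for `ℓ ≥ 1`. -/
noncomputable def sphereMultiplicity (n ℓ : ℕ) : ℝ :=
  if ℓ = 0 then 1 else (Nat.choose (n + ℓ) n : ℝ) - (Nat.choose (n + ℓ - 2) n : ℝ)

/-! The partial sums of `∑ μ_{n,ℓ} (Λ - e_ℓ)(n(Λ - e_ℓ) - 4e_ℓ - n²)` have the closed form
`C(n+k-1, n-1) (m-k)(m-k+1)(n+2k)(n+m+k)(n+m+k+1)`, which vanishes at `k = m`.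
Writing `μ_{n,k+1} = C(n+k, n-1) + C(n+k-1, n-1)` by Pascal's rule, the induction step reduces,
through the ratio `C(n+k, n-1) / C(n+k-1, n-1) = (n+k)/(k+1)`, to a polynomial identity. -/

theorem sphereMultiplicity_zero (n : ℕ) : sphereMultiplicity n 0 = 1 := if_pos rfl

theorem sphereMultiplicity_add_one (d k : ℕ) :
    sphereMultiplicity (d + 1) (k + 1) = (d + k + 1).choose d + (d + k).choose d := by
  have hpascal : (d + k + 2).choose (d + 1) = (d + k + 1).choose d + (d + k).choose d
      + (d + k).choose (d + 1) := by
    rw [Nat.choose_succ_succ, Nat.choose_succ_succ (d + k), ← add_assoc]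
  rw [sphereMultiplicity, if_neg k.succ_ne_zero, show d + 1 + (k + 1) = d + k + 2 by omega,
    Nat.add_sub_cancel, hpascal]
  push_cast
  ring

theorem add_one_mul_choose_add_add_one (d k : ℕ) :
    (k + 1) * (d + k + 1).choose d = (d + k + 1) * (d + k).choose d := by
  have h := Nat.choose_mul_succ_eq (d + k) d
  rw [show d + k + 1 - d = k + 1 by omega] at h
  linarith

def saturationDefect (n m ℓ : ℝ) : ℝ :=
  ((m + 1) * (m + n) - ℓ * (ℓ + n - 1)) *
    (n * ((m + 1) * (m + n) - ℓ * (ℓ + n - 1)) - (4 * (ℓ * (ℓ + n - 1)) + n ^ 2))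

def saturationDefectSumFactor (n m k : ℝ) : ℝ :=
  (m - k) * (m - k + 1) * (n + 2 * k) * (n + m + k) * (n + m + k + 1)

theorem saturationDefectSumFactor_zero (n m : ℝ) :
    saturationDefectSumFactor n m 0 = saturationDefect n m 0 := by
  unfold saturationDefectSumFactor saturationDefect
  ring

theorem saturationDefectSumFactor_self (n m : ℝ) : saturationDefectSumFactor n m m = 0 := by
  simp [saturationDefectSumFactor]

theorem saturationDefectSumFactor_add_one (n m k : ℝ) :
    (n + k) * (saturationDefectSumFactor n m (k + 1) - saturationDefect n m (k + 1))
      = (k + 1) * (saturationDefectSumFactor n m k + saturationDefect n m (k + 1)) := by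
  unfold saturationDefectSumFactor saturationDefect
  ring

theorem sum_range_sphereMultiplicity_mul_saturationDefect (d m k : ℕ) :
    ∑ ℓ ∈ Finset.range (k + 1), sphereMultiplicity (d + 1) ℓ * saturationDefect (d + 1) m ℓ
      = (d + k).choose d * saturationDefectSumFactor (d + 1) m k := by
  induction k with
  | zero =>
    simp [sphereMultiplicity_zero, saturationDefectSumFactor_zero]
  | succ k ih =>
    have hratio : ((k : ℝ) + 1) * (d + k + 1).choose d = (d + k + 1) * (d + k).choose d := by
      exact_mod_cast add_one_mul_choose_add_add_one d k
    have hstep := saturationDefectSumFactor_add_one (d + 1) m k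
    rw [Finset.sum_range_succ, ih, sphereMultiplicity_add_one, ← add_assoc]
    apply mul_left_cancel₀ (show (k : ℝ) + 1 ≠ 0 by positivity)
    push_cast at hstep ⊢
    linear_combination
      (saturationDefect (d + 1) m (k + 1) - saturationDefectSumFactor (d + 1) m (k + 1)) * hratio
        - ((d + k).choose d : ℝ) * hstep

/-- The exact identity at the heart of Corollary 2.4: the universal inequality (I) of
Theorem 2.1 is saturated for the standard sphere `𝕊ⁿ` at every eigenvalue gap.
Here `e ℓ = ℓ(ℓ+n−1)` and `Λ = (m+1)(m+n)`. -/
theorem sphere_saturation (n m : ℕ) (hn : 1 ≤ n) :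
    (n : ℝ) * ∑ ℓ ∈ Finset.range (m+1), sphereMultiplicity n ℓ *
        (((m : ℝ) + 1) * ((m : ℝ) + n) - (ℓ : ℝ) * ((ℓ : ℝ) + n - 1))^2
      = ∑ ℓ ∈ Finset.range (m+1), sphereMultiplicity n ℓ *
        (((m : ℝ) + 1) * ((m : ℝ) + n) - (ℓ : ℝ) * ((ℓ : ℝ) + n - 1)) *
        (4 * ((ℓ : ℝ) * ((ℓ : ℝ) + n - 1)) + (n : ℝ)^2) := by
  obtain ⟨d, rfl⟩ := Nat.exists_eq_add_of_le' hn
  have hsum := sum_range_sphereMultiplicity_mul_saturationDefect d m m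
  rw [saturationDefectSumFactor_self, mul_zero] at hsum
  rw [← sub_eq_zero, Finset.mul_sum, ← Finset.sum_sub_distrib, ← hsum]
  refine Finset.sum_congr rfl fun ℓ _ => ?_
  push_cast
  unfold saturationDefect
  ring
end
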